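/- For every ε ∈ [0,1] and every function f : {0,1}^n → ℝ≥0, the 2-norm of T_ε f is at most the (1+ε²)-norm of f, where T_ε f(x) = E[f(Y)] with Y obtained from x by independently keeping each coordinate with probability (1+ε)/2 and flipping it otherwise, and norms are with respect to the uniform measure on {0,1}^n. -/

import Mathlib

/-!
Induction on `n`. Fixing the first bit `b` of `x`, `T_ε f (b, ·)` is the noise operator on
`n - 1` bits applied to `g_b = ∑_c w(b, c) f(c, ·)`, where `w(b, c)` is the probability that the
noise sends `b` to `c`. The induction hypothesis and Minkowski's inequality bound `‖T_ε f‖₂²` by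
`½ ∑_b (∑_c w(b, c) a_c)²` with `a_c = ‖f(c, ·)‖_p`, `p = 1 + ε²`, so everything reduces to the
one-bit case. Writing `a = s (1 ± t)`, the one-bit left side is `s² (1 + ε² t²)`, and
`(1 + ε² t²) ^ (p / 2) ≤ 1 + p (p - 1) t² / 2 ≤ ((1 + t) ^ p + (1 - t) ^ p) / 2`
by Bernoulli's inequality and a second-order Taylor bound valid for `1 ≤ p ≤ 2`.
-/

open Finset Real

theorem two_mul_mul_le_one_add_rpow_sub_one_sub_rpow {q t : ℝ} (hq0 : 0 ≤ q) (hq1 : q ≤ 1)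
    (ht : t ∈ Set.Icc (0 : ℝ) 1) : 2 * q * t ≤ (1 + t) ^ q - (1 - t) ^ q := by
  let g : ℝ → ℝ := fun s => (1 + s) ^ q - (1 - s) ^ q - 2 * q * s
  have hg' : ∀ s ∈ Set.Ioo (0 : ℝ) 1,
      HasDerivAt g (q * ((1 + s) ^ (q - 1) + (1 - s) ^ (q - 1) - 2)) s := by
    intro s hs
    have hplus := ((hasDerivAt_id' s).const_add 1).rpow_const (p := q)
      (Or.inl (by linarith [hs.1]))
    have hminus := ((hasDerivAt_id' s).const_sub 1).rpow_const (p := q)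
      (Or.inl (by linarith [hs.2]))
    exact ((hplus.sub hminus).sub ((hasDerivAt_id' s).const_mul (2 * q))).congr_deriv (by ring)
  -- `(1 + s) ^ (q - 1) * (1 - s) ^ (q - 1) = (1 - s ^ 2) ^ (q - 1) ≥ 1`, so the two powers add up
  -- to at least `2`
  have hg'_nonneg : ∀ s ∈ Set.Ioo (0 : ℝ) 1,
      0 ≤ q * ((1 + s) ^ (q - 1) + (1 - s) ^ (q - 1) - 2) := by
    intro s hs
    have hplus : 0 < 1 + s := by linarith [hs.1]
    have hminus : 0 < 1 - s := by linarith [hs.2]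
    have hprod : 1 ≤ (1 + s) ^ (q - 1) * (1 - s) ^ (q - 1) := by
      rw [← mul_rpow hplus.le hminus.le]
      exact one_le_rpow_of_pos_of_le_one_of_nonpos (by positivity) (by nlinarith [sq_nonneg s])
        (by linarith)
    have := rpow_nonneg hplus.le (q - 1)
    have := rpow_nonneg hminus.le (q - 1)
    have : 2 ≤ (1 + s) ^ (q - 1) + (1 - s) ^ (q - 1) := by
      nlinarith [sq_nonneg ((1 + s) ^ (q - 1) - (1 - s) ^ (q - 1))]
    exact mul_nonneg hq0 (by linarith)
  have hmono : MonotoneOn g (Set.Icc 0 1) :=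
    monotoneOn_of_hasDerivWithinAt_nonneg (convex_Icc 0 1)
      (Continuous.continuousOn (by simp only [g]; fun_prop (disch := assumption)))
      (by simpa only [interior_Icc] using fun s hs => (hg' s hs).hasDerivWithinAt)
      (by simpa only [interior_Icc] using hg'_nonneg)
  have := hmono (Set.left_mem_Icc.2 zero_le_one) ht ht.1
  simp only [g, add_zero, sub_zero, one_rpow, mul_zero] at this
  linarith

theorem one_add_mul_sq_le_avg_rpow {p t : ℝ} (hp1 : 1 ≤ p) (hp2 : p ≤ 2)
    (ht : t ∈ Set.Icc (-1 : ℝ) 1) :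
    1 + p * (p - 1) / 2 * t ^ 2 ≤ ((1 + t) ^ p + (1 - t) ^ p) / 2 := by
  wlog ht0 : 0 ≤ t generalizing t
  · have := this (t := -t) ⟨by linarith [ht.2], by linarith [ht.1]⟩ (by linarith)
    rwa [neg_sq, ← sub_eq_add_neg, sub_neg_eq_add, add_comm ((1 - t) ^ p)] at this
  let h : ℝ → ℝ := fun s => ((1 + s) ^ p + (1 - s) ^ p) / 2 - p * (p - 1) / 2 * s ^ 2
  have hh' : ∀ s ∈ Set.Ioo (0 : ℝ) 1,
      HasDerivAt h (p / 2 * ((1 + s) ^ (p - 1) - (1 - s) ^ (p - 1) - 2 * (p - 1) * s)) s := by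
    intro s hs
    have hplus := ((hasDerivAt_id' s).const_add 1).rpow_const (p := p)
      (Or.inl (by linarith [hs.1]))
    have hminus := ((hasDerivAt_id' s).const_sub 1).rpow_const (p := p)
      (Or.inl (by linarith [hs.2]))
    exact (((hplus.add hminus).div_const 2).sub
      ((hasDerivAt_pow 2 s).const_mul (p * (p - 1) / 2))).congr_deriv (by ring)
  have hh'_nonneg : ∀ s ∈ Set.Ioo (0 : ℝ) 1,
      0 ≤ p / 2 * ((1 + s) ^ (p - 1) - (1 - s) ^ (p - 1) - 2 * (p - 1) * s) := fun s hs =>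
    mul_nonneg (by linarith) <| sub_nonneg.2 <|
      two_mul_mul_le_one_add_rpow_sub_one_sub_rpow (by linarith) (by linarith)
        (Set.Ioo_subset_Icc_self hs)
  have hmono : MonotoneOn h (Set.Icc 0 1) :=
    monotoneOn_of_hasDerivWithinAt_nonneg (convex_Icc 0 1)
      (Continuous.continuousOn (by simp only [h]; fun_prop (disch := linarith)))
      (by simpa only [interior_Icc] using fun s hs => (hh' s hs).hasDerivWithinAt)
      (by simpa only [interior_Icc] using hh'_nonneg)
  have := hmono (Set.left_mem_Icc.2 zero_le_one) ⟨ht0, ht.2⟩ ht0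
  simp only [h, add_zero, sub_zero, one_rpow] at this
  linarith

theorem one_add_sq_mul_sq_le_avg_rpow_rpow_two_div {ε t : ℝ} (hε : |ε| ≤ 1)
    (ht : t ∈ Set.Icc (-1 : ℝ) 1) :
    1 + ε ^ 2 * t ^ 2 ≤
      (((1 + t) ^ (1 + ε ^ 2) + (1 - t) ^ (1 + ε ^ 2)) / 2) ^ (2 / (1 + ε ^ 2)) := by
  set p := 1 + ε ^ 2
  have hε2 : ε ^ 2 ≤ 1 := by nlinarith [abs_nonneg ε, sq_abs ε]
  have hbase : 0 ≤ 1 + ε ^ 2 * t ^ 2 := by positivity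
  have key : (1 + ε ^ 2 * t ^ 2) ^ (p / 2) ≤ ((1 + t) ^ p + (1 - t) ^ p) / 2 :=
    calc (1 + ε ^ 2 * t ^ 2) ^ (p / 2) ≤ 1 + p / 2 * (ε ^ 2 * t ^ 2) :=
          rpow_one_add_le_one_add_mul_self (by nlinarith) (by positivity) (by linarith)
      _ = 1 + p * (p - 1) / 2 * t ^ 2 := by ring
      _ ≤ _ := one_add_mul_sq_le_avg_rpow (by linarith [sq_nonneg ε]) (by linarith) ht
  calc 1 + ε ^ 2 * t ^ 2 = ((1 + ε ^ 2 * t ^ 2) ^ (p / 2)) ^ (2 / p) := by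
        rw [← rpow_mul hbase, div_mul_div_comm, mul_comm p 2, div_self (by positivity), rpow_one]
    _ ≤ _ := by gcongr

noncomputable def noiseWeight (ε : ℝ) (b c : Bool) : ℝ :=
  if b = c then (1 + ε) / 2 else (1 - ε) / 2

theorem noiseWeight_nonneg {ε : ℝ} (hε : |ε| ≤ 1) (b c : Bool) : 0 ≤ noiseWeight ε b c := by
  unfold noiseWeight
  split_ifs <;> linarith [abs_le.1 hε]

theorem two_point_hypercontractivity {ε : ℝ} (hε : |ε| ≤ 1) (a : Bool → ℝ) (ha : ∀ c, 0 ≤ a c) :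
    2⁻¹ * ∑ b, (∑ c, noiseWeight ε b c * a c) ^ 2 ≤
      ((2⁻¹ * ∑ c, a c ^ (1 + ε ^ 2)) ^ (1 + ε ^ 2)⁻¹) ^ 2 := by
  obtain ⟨s, t, hs, ht, htrue, hfalse⟩ : ∃ s t : ℝ, 0 ≤ s ∧ t ∈ Set.Icc (-1 : ℝ) 1 ∧
      a true = s * (1 + t) ∧ a false = s * (1 - t) := by
    have := ha true
    have := ha false
    rcases (add_nonneg (ha true) (ha false)).eq_or_lt with h | h
    · exact ⟨0, 0, le_rfl, by norm_num, by linarith, by linarith⟩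
    · refine ⟨(a true + a false) / 2, (a true - a false) / (a true + a false), by positivity,
        ⟨?_, ?_⟩, ?_, ?_⟩
      · rw [le_div_iff₀ h]; linarith
      · rw [div_le_one h]; linarith
      · field_simp; ring
      · field_simp; ring
  set p := 1 + ε ^ 2
  have hp : 0 < p := by positivity
  have h1 : 0 ≤ 1 + t := by linarith [ht.1]
  have h2 : 0 ≤ 1 - t := by linarith [ht.2]
  have hM : 0 ≤ ((1 + t) ^ p + (1 - t) ^ p) / 2 := by positivity
  calc 2⁻¹ * ∑ b, (∑ c, noiseWeight ε b c * a c) ^ 2 = s ^ 2 * (1 + ε ^ 2 * t ^ 2) := by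
        simp only [Fintype.sum_bool, noiseWeight, htrue, hfalse, if_true, Bool.true_eq_false,
          Bool.false_eq_true, if_false]
        ring
    _ ≤ s ^ 2 * (((1 + t) ^ p + (1 - t) ^ p) / 2) ^ (2 / p) := by
        gcongr; exact one_add_sq_mul_sq_le_avg_rpow_rpow_two_div hε ht
    _ = ((s ^ p * (((1 + t) ^ p + (1 - t) ^ p) / 2)) ^ p⁻¹) ^ 2 := by
        rw [mul_rpow (by positivity) hM, rpow_rpow_inv hs hp.ne', mul_pow,
          ← rpow_natCast (_ ^ p⁻¹), ← rpow_mul hM]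
        norm_num [div_eq_inv_mul]
    _ = ((2⁻¹ * ∑ c, a c ^ p) ^ p⁻¹) ^ 2 := by
        rw [Fintype.sum_bool, htrue, hfalse, mul_rpow hs h1, mul_rpow hs h2]
        ring_nf

theorem sum_fin_succ_pi {α M : Type*} [Fintype α] [AddCommMonoid M] {n : ℕ}
    (g : (Fin (n + 1) → α) → M) : ∑ x, g x = ∑ a, ∑ y, g (Fin.cons a y) := by
  rw [← (Fin.consEquiv fun _ => α).sum_comp g, Fintype.sum_prod_type]
  rfl

section Cube

variable {n : ℕ}

noncomputable def noiseOp (ε : ℝ) (f : (Fin n → Bool) → ℝ) (x : Fin n → Bool) : ℝ :=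
  ∑ y, (∏ i, noiseWeight ε (x i) (y i)) * f y

noncomputable def cubeAvg (g : (Fin n → Bool) → ℝ) : ℝ := ((2 : ℝ) ^ n)⁻¹ * ∑ x, g x

noncomputable def cubeNorm (p : ℝ) (f : (Fin n → Bool) → ℝ) : ℝ :=
  cubeAvg (fun x => |f x| ^ p) ^ p⁻¹

theorem cubeAvg_nonneg {g : (Fin n → Bool) → ℝ} (hg : ∀ x, 0 ≤ g x) : 0 ≤ cubeAvg g :=
  mul_nonneg (by positivity) (sum_nonneg fun x _ => hg x)

theorem cubeAvg_succ (g : (Fin (n + 1) → Bool) → ℝ) :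
    cubeAvg g = 2⁻¹ * ∑ b, cubeAvg fun y => g (Fin.cons b y) := by
  simp only [cubeAvg, sum_fin_succ_pi g, ← mul_sum, pow_succ, mul_inv]
  ring

theorem noiseOp_cons (ε : ℝ) (f : (Fin (n + 1) → Bool) → ℝ) (b : Bool) (x : Fin n → Bool) :
    noiseOp ε f (Fin.cons b x) =
      noiseOp ε (fun y => ∑ c, noiseWeight ε b c * f (Fin.cons c y)) x := by
  simp only [noiseOp, sum_fin_succ_pi, Fin.prod_univ_succ, Fin.cons_zero, Fin.cons_succ, mul_sum]
  rw [sum_comm]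
  exact sum_congr rfl fun y _ => sum_congr rfl fun c _ => by ring

theorem cubeNorm_nonneg (p : ℝ) (f : (Fin n → Bool) → ℝ) : 0 ≤ cubeNorm p f :=
  rpow_nonneg (cubeAvg_nonneg fun _ => by positivity) _

theorem cubeNorm_rpow {p : ℝ} (hp : p ≠ 0) (f : (Fin n → Bool) → ℝ) :
    cubeNorm p f ^ p = cubeAvg fun x => |f x| ^ p :=
  rpow_inv_rpow (cubeAvg_nonneg fun _ => by positivity) hp

theorem cubeNorm_const_mul {p : ℝ} (hp : p ≠ 0) (w : ℝ) (f : (Fin n → Bool) → ℝ) :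
    cubeNorm p (fun x => w * f x) = |w| * cubeNorm p f := by
  simp only [cubeNorm, cubeAvg, abs_mul, mul_rpow (abs_nonneg w) (abs_nonneg _), ← mul_sum,
    mul_left_comm _ (|w| ^ p)]
  rw [mul_rpow (by positivity) (mul_nonneg (by positivity) (sum_nonneg fun x _ => by positivity)),
    rpow_rpow_inv (abs_nonneg w) hp]

theorem cubeNorm_add_le {p : ℝ} (hp : 1 ≤ p) (f g : (Fin n → Bool) → ℝ) :
    cubeNorm p (f + g) ≤ cubeNorm p f + cubeNorm p g := by
  have hsplit : ∀ h : (Fin n → Bool) → ℝ,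
      cubeNorm p h = ((2 : ℝ) ^ n)⁻¹ ^ p⁻¹ * (∑ x, |h x| ^ p) ^ (1 / p) := fun h => by
    rw [cubeNorm, cubeAvg, mul_rpow (by positivity) (sum_nonneg fun x _ => by positivity), one_div]
  simp only [hsplit, ← mul_add]
  exact mul_le_mul_of_nonneg_left (Lp_add_le univ f g hp) (by positivity)

theorem cubeNorm_sum_le {p : ℝ} (hp : 1 ≤ p) {ι : Type*} (s : Finset ι)
    (f : ι → (Fin n → Bool) → ℝ) :
    cubeNorm p (fun x => ∑ i ∈ s, f i x) ≤ ∑ i ∈ s, cubeNorm p (f i) := by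
  rw [← sum_fn]
  exact le_sum_of_subadditive (cubeNorm p)
    (by simp [cubeNorm, cubeAvg, zero_rpow, (zero_lt_one.trans_le hp).ne']) (cubeNorm_add_le hp) s f

theorem cubeAvg_sq_noiseOp_le {ε : ℝ} (hε : |ε| ≤ 1) (f : (Fin n → Bool) → ℝ) :
    cubeAvg (fun x => noiseOp ε f x ^ 2) ≤ cubeNorm (1 + ε ^ 2) f ^ 2 := by
  have hp : (1 : ℝ) ≤ 1 + ε ^ 2 := by nlinarith [sq_nonneg ε]
  have hp0 : 1 + ε ^ 2 ≠ 0 := by positivity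
  induction n with
  | zero => simp [cubeAvg, cubeNorm, noiseOp, rpow_rpow_inv (abs_nonneg _) hp0]
  | succ n ih =>
    let a c := cubeNorm (1 + ε ^ 2) fun y => f (Fin.cons c y)
    have hminkowski (b : Bool) :
        cubeNorm (1 + ε ^ 2) (fun y => ∑ c, noiseWeight ε b c * f (Fin.cons c y)) ≤
          ∑ c, noiseWeight ε b c * a c := by
      refine (cubeNorm_sum_le hp univ fun c y => noiseWeight ε b c * f (Fin.cons c y)).trans_eq ?_
      simp only [cubeNorm_const_mul hp0, abs_of_nonneg (noiseWeight_nonneg hε b _), a]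
    calc cubeAvg (fun x => noiseOp ε f x ^ 2)
        = 2⁻¹ * ∑ b, cubeAvg fun y =>
            noiseOp ε (fun y => ∑ c, noiseWeight ε b c * f (Fin.cons c y)) y ^ 2 := by
          simp only [cubeAvg_succ (fun x => noiseOp ε f x ^ 2), noiseOp_cons]
      _ ≤ 2⁻¹ * ∑ b,
            cubeNorm (1 + ε ^ 2) (fun y => ∑ c, noiseWeight ε b c * f (Fin.cons c y)) ^ 2 := by
          gcongr with b; exact ih _
      _ ≤ 2⁻¹ * ∑ b, (∑ c, noiseWeight ε b c * a c) ^ 2 := by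
          gcongr with b
          · exact cubeNorm_nonneg _ _
          · exact hminkowski b
      _ ≤ ((2⁻¹ * ∑ c, a c ^ (1 + ε ^ 2)) ^ (1 + ε ^ 2)⁻¹) ^ 2 :=
          two_point_hypercontractivity hε a fun c => cubeNorm_nonneg _ _
      _ = cubeNorm (1 + ε ^ 2) f ^ 2 := by
          simp only [a, cubeNorm_rpow hp0]
          rw [cubeNorm, cubeAvg_succ fun x => |f x| ^ (1 + ε ^ 2)]

end Cube

theorem hypercontractivity (n : ℕ) (ε : ℝ) (hε : ε ∈ Set.Icc (0:ℝ) 1)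
    (f : (Fin n → Bool) → ℝ) (hf : ∀ x, 0 ≤ f x) :
    (((2:ℝ)^n)⁻¹ * ∑ x : Fin n → Bool,
        (∑ y : Fin n → Bool,
          (∏ i, if x i = y i then (1+ε)/2 else (1-ε)/2) * f y) ^ (2:ℕ)) ^ ((2:ℝ)⁻¹)
      ≤ (((2:ℝ)^n)⁻¹ * ∑ x : Fin n → Bool, f x ^ (1 + ε^2)) ^ ((1 + ε^2)⁻¹) := by
  have hnorm : cubeNorm (1 + ε ^ 2) f = (((2:ℝ)^n)⁻¹ * ∑ x, f x ^ (1 + ε^2)) ^ ((1 + ε^2)⁻¹) := by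
    simp only [cubeNorm, cubeAvg, abs_of_nonneg (hf _)]
  change cubeAvg (fun x => noiseOp ε f x ^ 2) ^ (2 : ℝ)⁻¹ ≤ _
  rw [← hnorm, rpow_inv_le_iff_of_pos (cubeAvg_nonneg fun x => sq_nonneg _)
    (cubeNorm_nonneg _ _) two_pos, rpow_two]
  exact cubeAvg_sq_noiseOp_le (abs_le.2 ⟨by linarith [hε.1], hε.2⟩) f
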